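/- arXiv:1310.8025 — 2 statements merged into one kernel-verified Lean document; each statement's English description precedes it below -/
import Mathlib

section
/- For λ a positive integer and n ≥ 0, the Boole polynomial satisfies 2 Bl_n(x|λ) = ∑_{l=0}^{n} s(n,l) λ^l E_l(x/λ), where s(n,l) are the signed Stirling numbers of the first kind and E_l the Euler polynomials. -/
open Finset PowerSeries

/-- Stirling numbers of the second kind. -/
def stirling2 : ℕ → ℕ → ℕ
  | 0, 0 => 1
  | 0, _ + 1 => 0
  | _ + 1, 0 => 0
  | n + 1, k + 1 => (k + 1) * stirling2 n (k + 1) + stirling2 n k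

/-- Unsigned Stirling numbers of the first kind. -/
def stirling1 : ℕ → ℕ → ℕ
  | 0, 0 => 1
  | 0, _ + 1 => 0
  | _ + 1, 0 => 0
  | n + 1, k + 1 => n * stirling1 n (k + 1) + stirling1 n k

/-- Signed Stirling numbers of the first kind. -/
def s1 (n l : ℕ) : ℚ := (-1) ^ (n - l) * (stirling1 n l : ℚ)

/-- The exponential generating function `∑ a n * t^n / n!` as a power series over `ℚ`. -/
noncomputable def egf (a : ℕ → ℚ) : PowerSeries ℚ :=
  PowerSeries.mk fun n => a n / (Nat.factorial n : ℚ)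

/-- The binomial series `(1+t)^x = ∑ (x)_n t^n / n!` for `x : ℚ`. -/
noncomputable def onePlusTPow (x : ℚ) : PowerSeries ℚ :=
  egf fun n => ∏ i ∈ Finset.range n, (x - i)

/-- `e^{xt}` as a power series over `ℚ`. -/
noncomputable def expXT (x : ℚ) : PowerSeries ℚ := egf fun n => x ^ n

/-!
Substituting `t ↦ λ log(1+t)` into the Euler generating function `2e^{yt}/(e^t+1)` at
`y = x/λ` turns it into `2(1+t)^x/((1+t)^λ+1)`, twice the Boole generating function.
On exponential generating functions this substitution sends `(u_l)` to
`(∑_l s(n,l) λ^l u_l)`, because `log(1+t)^l / l! = ∑_n s(n,l) t^n/n!`; the latter follows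
from `(1+t) d/dt log(1+t)^(l+1) = (l+1) log(1+t)^l` and the Stirling recurrence.
-/

open scoped Nat

theorem coeff_egf (u : ℕ → ℚ) (n : ℕ) : coeff n (egf u) = u n / n ! :=
  coeff_mk _ _

theorem egf_injective : Function.Injective egf := by
  intro u v h
  funext n
  have := congrArg (coeff n) h
  rwa [coeff_egf, coeff_egf, div_left_inj' (by positivity)] at this

theorem C_mul_egf (a : ℚ) (u : ℕ → ℚ) : C a * egf u = egf fun n => a * u n := by
  ext n
  rw [coeff_C_mul, coeff_egf, coeff_egf, mul_div_assoc]

theorem stirling1_eq_stirlingFirst : stirling1 = Nat.stirlingFirst := by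
  funext n k
  induction n generalizing k with
  | zero => cases k <;> rfl
  | succ n ih => cases k <;> simp [stirling1, Nat.stirlingFirst_succ_succ, ih]

theorem s1_zero_right (n : ℕ) : s1 n 0 = if n = 0 then 1 else 0 := by
  cases n <;> simp [s1, stirling1_eq_stirlingFirst]

theorem s1_of_lt {n l : ℕ} (h : n < l) : s1 n l = 0 := by
  simp [s1, stirling1_eq_stirlingFirst, Nat.stirlingFirst_eq_zero_of_lt h]

theorem s1_succ_succ (n l : ℕ) : s1 (n + 1) (l + 1) = s1 n l - n * s1 n (l + 1) := by
  rcases lt_or_ge n l with h | h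
  · simp [s1_of_lt h, s1_of_lt (Nat.succ_lt_succ h), s1_of_lt (h.trans (Nat.lt_succ_self l))]
  · obtain ⟨k, rfl⟩ := Nat.exists_eq_add_of_le h
    simp only [s1, stirling1_eq_stirlingFirst, Nat.stirlingFirst_succ_succ,
      show l + k + 1 - (l + 1) = k by omega, show l + k - l = k by omega]
    rcases k with _ | k
    · simp [Nat.stirlingFirst_eq_zero_of_lt (Nat.lt_succ_self l)]
    · simp only [show l + (k + 1) - (l + 1) = k by omega]
      push_cast
      ring

theorem coeff_descPochhammer (n l : ℕ) : (descPochhammer ℚ n).coeff l = s1 n l := by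
  induction n generalizing l with
  | zero => cases l <;> simp [s1, stirling1_eq_stirlingFirst, Polynomial.coeff_one]
  | succ n ih =>
    cases l with
    | zero => rw [Polynomial.coeff_zero_eq_eval_zero, descPochhammer_eval_zero, s1_zero_right]
    | succ l =>
      rw [descPochhammer_succ_right, ← map_natCast Polynomial.C, Polynomial.coeff_mul_X_sub_C,
        ih, ih, s1_succ_succ]
      ring

theorem sum_s1_mul_pow (n : ℕ) (c : ℚ) :
    ∑ l ∈ range (n + 1), s1 n l * c ^ l = ∏ i ∈ range n, (c - i) := by
  rw [← descPochhammer_eval_eq_prod_range, Polynomial.eval_eq_sum_range,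
    descPochhammer_natDegree]
  simp only [coeff_descPochhammer]

theorem coeff_one_add_X_mul_derivative {R : Type*} [CommSemiring R] (f : R⟦X⟧) (n : ℕ) :
    coeff n ((1 + X) * d⁄dX R f) = (n + 1) * coeff (n + 1) f + n * coeff n f := by
  rw [add_mul, one_mul, map_add, coeff_derivative]
  cases n with
  | zero => simp
  | succ n => rw [coeff_succ_X_mul, coeff_derivative]; push_cast; ring

theorem one_add_X_mul_derivative_log : (1 + X) * d⁄dX ℚ (log ℚ) = 1 := by
  ext n
  rw [coeff_one_add_X_mul_derivative, coeff_one]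
  rcases n with _ | n
  · simp
  · simp only [coeff_log, if_neg n.succ_ne_zero, if_neg (n + 1).succ_ne_zero, eq_ratCast,
      Rat.cast_id]
    push_cast
    field_simp
    ring

theorem one_add_X_mul_derivative_log_pow (l : ℕ) :
    (1 + X) * d⁄dX ℚ (log ℚ ^ (l + 1)) = C ((l : ℚ) + 1) * log ℚ ^ l := by
  rw [derivative_pow, mul_left_comm, one_add_X_mul_derivative_log, Nat.add_sub_cancel]
  simp [map_add]

theorem coeff_log_pow (n l : ℕ) : coeff n (log ℚ ^ l) = l ! * s1 n l / n ! := by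
  rw [eq_div_iff (by positivity)]
  induction l generalizing n with
  | zero => cases n <;> simp [coeff_one, s1_zero_right]
  | succ l ihl =>
    induction n with
    | zero => simp [s1_of_lt l.succ_pos]
    | succ n ihn =>
      have h := congrArg (coeff n) (one_add_X_mul_derivative_log_pow l)
      rw [coeff_one_add_X_mul_derivative, coeff_C_mul] at h
      have hl := ihl n
      rw [s1_succ_succ]
      simp only [Nat.factorial_succ, Nat.cast_mul, Nat.cast_succ] at ihn ⊢
      linear_combination (n ! : ℚ) * h - (n : ℚ) * ihn + ((l : ℚ) + 1) * hl

theorem hasSubst_C_mul_log (c : ℚ) : HasSubst (C c * log ℚ) :=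
  HasSubst.log.mul_right

theorem subst_C_mul_log_egf (c : ℚ) (u : ℕ → ℚ) :
    (egf u).subst (C c * log ℚ) = egf fun n => ∑ l ∈ range (n + 1), s1 n l * c ^ l * u l := by
  ext n
  have hterm (l : ℕ) :
      coeff l (egf u) • coeff n ((C c * log ℚ) ^ l) = s1 n l * c ^ l * u l / n ! := by
    rw [smul_eq_mul, mul_pow, ← map_pow, coeff_C_mul, coeff_log_pow, coeff_egf]
    field_simp
  rw [coeff_subst' (hasSubst_C_mul_log c), coeff_egf, sum_div,
    finsum_eq_sum_of_support_subset (s := range (n + 1))]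
  · exact sum_congr rfl fun l _ => hterm l
  · intro l hl
    rw [Function.mem_support, hterm] at hl
    rw [coe_range, Set.mem_Iio, Nat.lt_succ_iff]
    by_contra! h
    simp [s1_of_lt h] at hl

theorem subst_C_mul_log_expXT (c y : ℚ) :
    (expXT y).subst (C c * log ℚ) = onePlusTPow (c * y) := by
  simp only [expXT, onePlusTPow, subst_C_mul_log_egf, mul_assoc, ← mul_pow, sum_s1_mul_pow]

theorem exp_eq_expXT_one : exp ℚ = expXT 1 := by
  ext n
  simp [expXT, coeff_egf]

theorem onePlusTPow_natCast (L : ℕ) : onePlusTPow L = (1 + X) ^ L := by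
  ext n
  rw [onePlusTPow, coeff_egf, ← descPochhammer_eval_eq_prod_range,
    ← Nat.cast_choose_eq_descPochhammer_div, ← binomialSeries_nat (R := ℚ),
    binomialSeries_coeff, Ring.choose_natCast, smul_eq_mul, mul_one]

theorem two_boole_eq_sum_stirling1_euler (L : ℕ) (hL : 0 < L) (x : ℚ)
    (Bl : ℕ → ℚ) (E : ℕ → ℚ → ℚ)
    (hBl : egf Bl * (1 + (1 + PowerSeries.X) ^ L) = onePlusTPow x)
    (hE : ∀ y : ℚ, egf (fun m => E m y) * (PowerSeries.exp ℚ + 1) = 2 * expXT y)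
    (n : ℕ) :
    2 * Bl n = ∑ l ∈ Finset.range (n + 1), s1 n l * (L : ℚ) ^ l * E l (x / L) := by
  have hEuler : egf (fun n => ∑ l ∈ range (n + 1), s1 n l * (L : ℚ) ^ l * E l (x / L)) *
      ((1 + X) ^ L + 1) = 2 * onePlusTPow x := by
    have h := congrArg (substAlgHom (hasSubst_C_mul_log L)) (hE (x / L))
    rwa [map_mul, map_add, map_one, map_mul, map_ofNat, coe_substAlgHom, subst_C_mul_log_egf,
      exp_eq_expXT_one, subst_C_mul_log_expXT, subst_C_mul_log_expXT, mul_one,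
      mul_div_cancel₀ x (by positivity), onePlusTPow_natCast] at h
  have hne : 1 + (1 + X : ℚ⟦X⟧) ^ L ≠ 0 := fun h => by simpa using congrArg constantCoeff h
  have hegf : egf (fun n => 2 * Bl n) =
      egf (fun n => ∑ l ∈ range (n + 1), s1 n l * (L : ℚ) ^ l * E l (x / L)) := by
    apply mul_right_cancel₀ hne
    rw [← C_mul_egf, map_ofNat, mul_assoc, hBl, ← hEuler, add_comm ((1 + X : ℚ⟦X⟧) ^ L)]
  exact congrFun (egf_injective hegf) n
end

section
/- Let k ≥ 1 and λ a positive integer. Define the order-k Boole polynomials of the second kind B̂l_n^{(k)}(x|λ) by ∑_{n≥0} B̂l_n^{(k)}(x|λ) t^n/n! = ((1+t)^λ/(1+(1+t)^λ))^k (1+t)^x. Then for every m ≥ 0, (λ^m/2^k) E_m^{(k)}(k + x/λ) = ∑_{n=0}^{m} B̂l_n^{(k)}(x|λ) S₂(m,n). -/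
/-!
Substituting `t ↦ eᵗ - 1` into an exponential generating function `∑ aₙ tⁿ/n!` yields the
exponential generating function of `m ↦ ∑ₙ aₙ S₂(m, n)`, since `(eᵗ - 1)ⁿ/n! = ∑ₘ S₂(m, n) tᵐ/m!`.
It sends `1 + t` to `eᵗ`, and by `∑ₙ S₂(m, n) (x)ₙ = xᵐ` it sends `(1 + t)ˣ` to `eˣᵗ`. Hence the
generating function of the Boole polynomials becomes `(e^{λt} / (1 + e^{λt}))ᵏ eˣᵗ`, which is
`2⁻ᵏ` times the generating function of `E_m^{(k)}(k + x/λ)` with `t` replaced by `λt`.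
-/

open Finset PowerSeries

theorem stirling2_eq_stirlingSecond : ∀ m n : ℕ, stirling2 m n = Nat.stirlingSecond m n
  | 0, 0 | 0, _ + 1 | _ + 1, 0 => rfl
  | m + 1, n + 1 => by
    rw [stirling2, Nat.stirlingSecond_succ_succ, stirling2_eq_stirlingSecond m n,
      stirling2_eq_stirlingSecond m (n + 1)]

theorem Nat.sum_stirlingSecond_mul_prod_range_sub {R : Type*} [CommRing R] (y : R) :
    ∀ m : ℕ, ∑ n ∈ range (m + 1), (m.stirlingSecond n : R) * ∏ i ∈ range n, (y - i) = y ^ m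
  | 0 => by simp
  | m + 1 => by
    set P : ℕ → R := fun n => ∏ i ∈ range n, (y - i)
    have hP : ∀ n, P (n + 1) = P n * (y - n) := fun n => prod_range_succ _ n
    have hshift : ∑ n ∈ range (m + 1), ((n + 1 : ℕ) : R) * m.stirlingSecond (n + 1) * P (n + 1) =
        ∑ n ∈ range (m + 1), (n : R) * m.stirlingSecond n * P n := by
      have h := sum_range_succ' (fun n => (n : R) * m.stirlingSecond n * P n) (m + 1)
      rw [sum_range_succ, Nat.stirlingSecond_eq_zero_of_lt m.lt_succ_self] at h
      simpa using h.symm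
    calc ∑ n ∈ range (m + 2), ((m + 1).stirlingSecond n : R) * P n
        = ∑ n ∈ range (m + 1), (((n + 1 : ℕ) : R) * m.stirlingSecond (n + 1) * P (n + 1) +
            m.stirlingSecond n * P (n + 1)) := by
          rw [sum_range_succ']
          simp [Nat.stirlingSecond_succ_succ, add_mul]
      _ = ∑ n ∈ range (m + 1), (m.stirlingSecond n : R) * (P n * (y - n) + n * P n) := by
          rw [sum_add_distrib, hshift, ← sum_add_distrib]
          refine sum_congr rfl fun n _ => ?_
          rw [hP]
          ring
      _ = y ^ (m + 1) := by
          rw [pow_succ, ← sum_stirlingSecond_mul_prod_range_sub y m, sum_mul]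
          exact sum_congr rfl fun n _ => by ring

namespace PowerSeries

open Nat

variable {A : Type*} [CommRing A]

theorem coeff_pow_eq_zero_of_constantCoeff_eq_zero {f : PowerSeries A}
    (hf : constantCoeff f = 0) {m n : ℕ} (h : m < n) : coeff m (f ^ n) = 0 :=
  coeff_of_lt_order _ <| (Nat.cast_lt.2 h).trans_le (le_order_pow_of_constantCoeff_eq_zero n hf)

variable [Algebra ℚ A]

theorem constantCoeff_exp_sub_one : constantCoeff (exp A - 1) = 0 := by simp

theorem hasSubst_exp_sub_one : HasSubst (exp A - 1) :=
  HasSubst.of_constantCoeff_zero' constantCoeff_exp_sub_one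

theorem derivative_exp_sub_one_pow (n : ℕ) :
    d⁄dX A ((exp A - 1) ^ (n + 1)) =
      (n + 1 : A) • ((exp A - 1) ^ (n + 1) + (exp A - 1) ^ n) := by
  rw [Derivation.leibniz_pow, map_sub, Derivation.map_one_eq_zero, derivative_exp, sub_zero,
    Nat.add_sub_cancel, ← Nat.cast_smul_eq_nsmul A]
  push_cast
  congr 1
  ring

theorem factorial_mul_coeff_exp_sub_one_pow (m n : ℕ) :
    (m ! : A) * coeff m ((exp A - 1) ^ n) = n ! * m.stirlingSecond n := by
  induction m generalizing n with
  | zero => cases n <;> simp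
  | succ m ih =>
    cases n with
    | zero => simp [coeff_one]
    | succ n =>
      have hd := congrArg (coeff m) (derivative_exp_sub_one_pow (A := A) n)
      rw [coeff_derivative, map_smul, map_add, smul_eq_mul] at hd
      calc ((m + 1)! : A) * coeff (m + 1) ((exp A - 1) ^ (n + 1))
          = m ! * (coeff (m + 1) ((exp A - 1) ^ (n + 1)) * (m + 1)) := by
            push_cast [Nat.factorial_succ]
            ring
        _ = (n + 1) * (m ! * coeff m ((exp A - 1) ^ (n + 1)) +
              m ! * coeff m ((exp A - 1) ^ n)) := by
            rw [hd]
            ring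
        _ = (n + 1)! * (m + 1).stirlingSecond (n + 1) := by
            rw [ih, ih, Nat.stirlingSecond_succ_succ, Nat.factorial_succ]
            push_cast
            ring

theorem coeff_subst_exp_sub_one (f : PowerSeries A) (m : ℕ) :
    coeff m (f.subst (exp A - 1)) =
      ∑ n ∈ range (m + 1), coeff n f * coeff m ((exp A - 1) ^ n) := by
  rw [coeff_subst' hasSubst_exp_sub_one, finsum_eq_sum_of_support_subset]
  · rfl
  · intro n hn
    rw [coe_range, Set.mem_Iio]
    by_contra! hmn
    exact hn (by simp only [coeff_pow_eq_zero_of_constantCoeff_eq_zero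
      constantCoeff_exp_sub_one hmn, smul_zero])

theorem factorial_mul_coeff_subst_exp_sub_one (f : PowerSeries A) (m : ℕ) :
    (m ! : A) * coeff m (f.subst (exp A - 1)) =
      ∑ n ∈ range (m + 1), (n ! : A) * coeff n f * m.stirlingSecond n := by
  rw [coeff_subst_exp_sub_one, mul_sum]
  refine sum_congr rfl fun n _ => ?_
  rw [mul_left_comm, factorial_mul_coeff_exp_sub_one_pow]
  ring

end PowerSeries

open Nat in
theorem coeff_subst_exp_sub_one_egf (a : ℕ → ℚ) (m : ℕ) :
    coeff m ((egf a).subst (exp ℚ - 1)) =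
      (∑ n ∈ range (m + 1), a n * m.stirlingSecond n) / m ! := by
  rw [eq_div_iff (by positivity), mul_comm, factorial_mul_coeff_subst_exp_sub_one]
  refine sum_congr rfl fun n _ => ?_
  rw [egf, coeff_mk]
  field_simp

theorem subst_exp_sub_one_onePlusTPow (x : ℚ) :
    (onePlusTPow x).subst (exp ℚ - 1) = expXT x := by
  ext m
  rw [onePlusTPow, coeff_subst_exp_sub_one_egf, expXT, egf, coeff_mk,
    ← Nat.sum_stirlingSecond_mul_prod_range_sub x m]
  simp only [mul_comm]

theorem expXT_eq_rescale_exp (y : ℚ) : expXT y = rescale y (exp ℚ) := by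
  ext n
  simp [expXT, egf, div_eq_mul_inv]

theorem rescale_egf (c : ℚ) (a : ℕ → ℚ) : rescale c (egf a) = egf fun n => c ^ n * a n := by
  ext n
  simp [egf, mul_div_assoc]

theorem subst_exp_sub_one_of_boole_egf {k L : ℕ} {x : ℚ} {B : ℕ → ℚ}
    (hB : egf B * (1 + (1 + X) ^ L) ^ k = (1 + X) ^ (L * k) * onePlusTPow x) :
    (egf B).subst (exp ℚ - 1) * (1 + exp ℚ ^ L) ^ k = rescale (L * k + x : ℚ) (exp ℚ) := by
  have h := congrArg (substAlgHom (hasSubst_exp_sub_one (A := ℚ))) hB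
  simp only [map_mul, map_pow, map_add, map_one, coe_substAlgHom, subst_X hasSubst_exp_sub_one,
    subst_exp_sub_one_onePlusTPow, add_sub_cancel] at h
  rw [h, exp_pow_eq_rescale_exp, expXT_eq_rescale_exp, exp_mul_exp_eq_exp_add]
  push_cast
  rfl

theorem rescale_of_euler_egf {k : ℕ} {E : ℕ → ℚ → ℚ}
    (hE : ∀ y, egf (fun m => E m y) * (exp ℚ + 1) ^ k = 2 ^ k * expXT y) (L : ℕ) (y : ℚ) :
    egf (fun n => (L : ℚ) ^ n * E n y) * (1 + exp ℚ ^ L) ^ k =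
      2 ^ k * rescale (y * L) (exp ℚ) := by
  have h := congrArg (rescale (L : ℚ)) (hE y)
  simp only [map_mul, map_pow, map_add, map_one, map_ofNat, rescale_egf, expXT_eq_rescale_exp,
    rescale_rescale, ← exp_pow_eq_rescale_exp] at h
  rw [add_comm, h]

theorem boole2nd_order_k_stirling2_eq_euler_general (k L : ℕ) (hL : 0 < L) (x : ℚ)
    (Bhk : ℕ → ℚ) (Ek : ℕ → ℚ → ℚ)
    (hBhk : egf Bhk * (1 + (1 + PowerSeries.X) ^ L) ^ k =
      (1 + PowerSeries.X) ^ (L * k) * onePlusTPow x)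
    (hEk : ∀ y : ℚ, egf (fun m => Ek m y) * (PowerSeries.exp ℚ + 1) ^ k = 2 ^ k * expXT y)
    (m : ℕ) :
    ((L : ℚ) ^ m / 2 ^ k) * Ek m ((k : ℚ) + x / L) =
      ∑ n ∈ Finset.range (m + 1), Bhk n * (stirling2 m n : ℚ) := by
  have hy : ((k : ℚ) + x / L) * L = L * k + x := by field_simp
  have hunit : IsUnit ((1 + exp ℚ ^ L) ^ k) := isUnit_iff_constantCoeff.2 (by simp)
  have key : egf (fun n => (L : ℚ) ^ n * Ek n (k + x / L)) =
      C (2 ^ k) * (egf Bhk).subst (exp ℚ - 1) := by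
    refine hunit.mul_left_injective ?_
    simp only [rescale_of_euler_egf hEk, hy, mul_assoc, subst_exp_sub_one_of_boole_egf hBhk,
      map_pow, map_ofNat]
  have hm := congrArg (coeff m) key
  rw [egf, coeff_mk, coeff_C_mul, coeff_subst_exp_sub_one_egf] at hm
  simp only [stirling2_eq_stirlingSecond]
  field_simp at hm ⊢
  linear_combination hm

theorem boole2nd_order_k_stirling2_eq_euler (k L : ℕ) (hk : 1 ≤ k) (hL : 0 < L) (x : ℚ)
    (Bhk : ℕ → ℚ) (Ek : ℕ → ℚ → ℚ)
    (hBhk : egf Bhk * (1 + (1 + PowerSeries.X) ^ L) ^ k =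
      (1 + PowerSeries.X) ^ (L * k) * onePlusTPow x)
    (hEk : ∀ y : ℚ, egf (fun m => Ek m y) * (PowerSeries.exp ℚ + 1) ^ k = 2 ^ k * expXT y)
    (m : ℕ) :
    ((L : ℚ) ^ m / 2 ^ k) * Ek m ((k : ℚ) + x / L) =
      ∑ n ∈ Finset.range (m + 1), Bhk n * (stirling2 m n : ℚ) :=
  boole2nd_order_k_stirling2_eq_euler_general k L hL x Bhk Ek hBhk hEk m
end
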